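/- arXiv:2307.13946 — 2 statements merged into one kernel-verified Lean document; each statement's English description precedes it below -/
import Mathlib

section
/- Let G be a metacyclic 2-group with δ_CD(G) ≤ 6 and Z(G) ≅ C₂. Then |G| ≤ 2⁵. -/
noncomputable def mCD {G : Type*} [Group G] (H : Subgroup G) : ℕ :=
  Nat.card H * Nat.card (Subgroup.centralizer (H : Set G))

noncomputable def mStar (G : Type*) [Group G] : ℕ :=
  sSup (Set.range fun H : Subgroup G => mCD H)

noncomputable def CD (G : Type*) [Group G] : Set (Subgroup G) :=
  {H | mCD H = mStar G}

noncomputable def deltaCD (G : Type*) [Group G] : ℕ :=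
  Nat.card {H : Subgroup G // H ∉ CD G}

/-- For odd `k`, `k ^ (2 ^ (j+1)) ≡ 1 mod 2 ^ (j+3)`. -/
lemma aux_odd_pow (j : ℕ) {k : ℕ} (hk : Odd k) :
    (2 : ℤ) ^ (j + 3) ∣ (k : ℤ) ^ (2 ^ (j + 1)) - 1 := by
  induction j with
  | zero =>
    obtain ⟨t, ht⟩ := hk
    obtain ⟨r, hr⟩ := Int.even_mul_succ_self (t : ℤ)
    have hk' : (k : ℤ) = 2 * t + 1 := by exact_mod_cast congrArg (fun x : ℕ => (x : ℤ)) ht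
    refine ⟨r, ?_⟩
    rw [hk']
    push_cast
    nlinarith [hr]
  | succ j ih =>
    have hKodd : Odd ((k : ℤ) ^ (2 ^ (j + 1))) := by
      refine Odd.pow ?_
      exact_mod_cast hk
    obtain ⟨v, hv⟩ : Even ((k : ℤ) ^ (2 ^ (j + 1)) + 1) := by
      rcases hKodd with ⟨c, hc⟩
      exact ⟨c + 1, by omega⟩
    have hexp : (2 : ℕ) ^ (j + 2) = 2 ^ (j + 1) * 2 := by ring
    have hsq : (k : ℤ) ^ (2 ^ (j + 2)) = ((k : ℤ) ^ (2 ^ (j + 1))) ^ 2 := by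
      rw [hexp, pow_mul]
    have hfact : (k : ℤ) ^ (2 ^ (j + 2)) - 1 =
        ((k : ℤ) ^ (2 ^ (j + 1)) - 1) * ((k : ℤ) ^ (2 ^ (j + 1)) + 1) := by
      rw [hsq]; ring
    have h2 : (2 : ℤ) ∣ ((k : ℤ) ^ (2 ^ (j + 1)) + 1) := ⟨v, by omega⟩
    have := mul_dvd_mul ih h2
    rw [← hfact] at this
    have hpow : (2 : ℤ) ^ (j + 1 + 3) = 2 ^ (j + 3) * 2 := by ring
    rw [hpow]
    exact this

/-- For odd `k`, `k ^ (2 ^ (max m 3 - 2)) ≡ 1 mod 2 ^ m`. -/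
lemma aux_odd_pow' (m : ℕ) {k : ℕ} (hk : Odd k) :
    k ^ 2 ^ (max m 3 - 2) ≡ 1 [MOD 2 ^ m] := by
  have h3 : (2 : ℤ) ^ (max m 3) ∣ (k : ℤ) ^ (2 ^ (max m 3 - 2)) - 1 := by
    have h := aux_odd_pow (max m 3 - 3) hk
    have e1 : max m 3 - 3 + 3 = max m 3 := by omega
    have e2 : max m 3 - 3 + 1 = max m 3 - 2 := by omega
    rw [e1, e2] at h
    exact h
  have h2 : (2 : ℤ) ^ m ∣ (k : ℤ) ^ (2 ^ (max m 3 - 2)) - 1 :=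
    dvd_trans (pow_dvd_pow 2 (le_max_left m 3)) h3
  have h1 : (1 : ℕ) ≡ k ^ 2 ^ (max m 3 - 2) [MOD 2 ^ m] := by
    rw [Nat.modEq_iff_dvd]
    push_cast
    exact h2
  exact h1.symm

set_option maxHeartbeats 2000000 in
theorem stmt16 {G : Type*} [Group G] [Finite G] (hG : IsPGroup 2 G)
    (hmeta : ∃ N : Subgroup G, ∃ _ : N.Normal, IsCyclic N ∧ IsCyclic (G ⧸ N))
    (h : deltaCD G ≤ 6) (hZ : Nat.card (Subgroup.center G) = 2) :
    Nat.card G ≤ 2 ^ 5 := by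
  classical
  by_contra hcard
  push_neg at hcard
  obtain ⟨N, hNnorm, hNcyc, hQNcyc⟩ := hmeta
  haveI := hNnorm
  haveI := hNcyc
  haveI := hQNcyc
  haveI : Fact (Nat.Prime 2) := ⟨Nat.prime_two⟩
  -- the centralizer of N
  set A : Subgroup G := Subgroup.centralizer (N : Set G) with hAdef
  -- N ≤ A
  obtain ⟨y, hy⟩ := IsCyclic.exists_generator (α := ↥N)
  have hNA : N ≤ A := by
    intro x hx
    rw [hAdef, Subgroup.mem_centralizer_iff]
    intro hG' hh
    obtain ⟨i, hi⟩ := (mem_powers_iff_mem_zpowers).2 (hy ⟨x, hx⟩)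
    obtain ⟨j, hj⟩ := (mem_powers_iff_mem_zpowers).2 (hy ⟨hG', hh⟩)
    have hx' : x = (y : G) ^ i := by
      have := congrArg (Subtype.val : ↥N → G) hi
      simpa using this.symm
    have hh' : hG' = (y : G) ^ j := by
      have := congrArg (Subtype.val : ↥N → G) hj
      simpa using this.symm
    rw [hx', hh']
    exact (Commute.pow_pow (Commute.refl (y : G)) j i)
  -- A is normal
  haveI hAnormal : A.Normal := by
    constructor
    intro c hc g
    rw [hAdef, Subgroup.mem_centralizer_iff]
    intro hG' hh
    have hh' : g⁻¹ * hG' * g ∈ N := by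
      have := hNnorm.conj_mem hG' hh g⁻¹
      simpa using this
    have h2 := hc _ hh'
    have := congrArg (fun x => g * x * g⁻¹) h2
    simp only [mul_assoc] at this
    calc hG' * (g * c * g⁻¹) = g * (g⁻¹ * (hG' * (g * (c * g⁻¹)))) := by group
    _ = g * (g⁻¹ * (hG' * (g * (c * g⁻¹)))) := rfl
    _ = g * c * g⁻¹ * hG' := by
        rw [this]; group
  -- A is commutative
  have habA : ∀ v w : G, v ∈ A → w ∈ A → v * w = w * v := by
    have hker : ((QuotientGroup.mk' N).comp A.subtype).ker ≤ Subgroup.center ↥A := by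
      intro w hw
      have hwN : (w : G) ∈ N := by
        rw [MonoidHom.mem_ker] at hw
        simpa [QuotientGroup.eq_one_iff] using hw
      rw [Subgroup.mem_center_iff]
      intro v
      refine Subtype.ext ?_
      push_cast
      exact (v.2 _ hwN).symm
    have hcomm := commutative_of_cyclic_center_quotient ((QuotientGroup.mk' N).comp A.subtype) hker
    intro v w hv hw
    exact congrArg Subtype.val (hcomm ⟨v, hv⟩ ⟨w, hw⟩)
  -- the quotient G/A is cyclic
  haveI hQcyc : IsCyclic (G ⧸ A) := by
    refine isCyclic_of_surjective
      (QuotientGroup.map N A (MonoidHom.id G) (by simpa using hNA)) ?_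
    intro x
    refine QuotientGroup.induction_on x fun g => ⟨QuotientGroup.mk g, ?_⟩
    simp [QuotientGroup.map_mk]
  set q : ℕ := Nat.card (G ⧸ A) with hqdef
  set a : ℕ := Nat.card ↥A with hadef
  have hq1 : 1 ≤ q := Nat.card_pos
  obtain ⟨n, hn⟩ := (IsPGroup.iff_card (p := 2)).1 hG
  obtain ⟨m, hm⟩ := (IsPGroup.iff_card (p := 2)).1 (hG.to_subgroup N)
  have hGa : Nat.card G = q * a := Subgroup.card_eq_card_quotient_mul_card_subgroup A
  -- order of the generator of N
  have hyord : orderOf (y : G) = 2 ^ m := by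
    rw [Subgroup.orderOf_coe]
    rw [orderOf_eq_card_of_forall_mem_zpowers hy]
    exact hm
  -- every 2^(max m 3 - 2) power lies in A
  have Hg : ∀ g : G, g ^ 2 ^ (max m 3 - 2) ∈ A := by
    intro g
    by_cases hm0 : m = 0
    · have hN1 : N = ⊥ := by
        rw [← Subgroup.card_eq_one]
        rw [hm, hm0, pow_zero]
      rw [hAdef, Subgroup.mem_centralizer_iff]
      intro hG' hh
      rw [hN1] at hh
      simp only [Subgroup.coe_bot, Set.mem_singleton_iff] at hh
      rw [hh]; simp
    · -- conjugation sends y to y^k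
      have hyN : (y : G) ∈ N := y.2
      have hconjN : g * (y : G) * g⁻¹ ∈ N := hNnorm.conj_mem _ hyN g
      obtain ⟨k, hk⟩ := (mem_powers_iff_mem_zpowers).2 (hy ⟨_, hconjN⟩)
      have hconj : g * (y : G) * g⁻¹ = (y : G) ^ k := by
        have := congrArg (Subtype.val : ↥N → G) hk
        simpa using this.symm
      -- k is odd
      have hkodd : Odd k := by
        have hordconj : orderOf (g * (y : G) * g⁻¹) = orderOf (y : G) := by
          refine (SemiconjBy.orderOf_eq g ?_).symm
          show g * (y : G) = (g * (y : G) * g⁻¹) * g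
          group
        rw [hconj, orderOf_pow] at hordconj
        rw [hyord] at hordconj
        have hgcd : Nat.gcd (2 ^ m) k = 1 := by
          have hd : Nat.gcd (2 ^ m) k ∣ 2 ^ m := Nat.gcd_dvd_left _ _
          have hpos : 0 < Nat.gcd (2 ^ m) k := by
            rcases Nat.eq_zero_or_pos (Nat.gcd (2 ^ m) k) with h0 | h0
            · exfalso
              have := Nat.eq_zero_of_gcd_eq_zero_left h0
              exact absurd this (by positivity)
            · exact h0
          have := Nat.div_mul_cancel hd
          nlinarith [Nat.one_le_two_pow (n := m)]
        rw [Nat.odd_iff]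
        rcases Nat.even_or_odd k with he | ho
        · exfalso
          have h2k : 2 ∣ k := he.two_dvd
          have h2m : 2 ∣ 2 ^ m := dvd_pow_self 2 hm0
          have := Nat.dvd_gcd h2m h2k
          rw [hgcd] at this
          omega
        · exact Nat.odd_iff.1 ho
      -- iterated conjugation
      have hiter : ∀ t : ℕ, g ^ t * (y : G) * (g ^ t)⁻¹ = (y : G) ^ (k ^ t) := by
        intro t
        induction t with
        | zero => simp
        | succ t ih =>
          have : g ^ (t + 1) = g * g ^ t := by rw [pow_succ']
          rw [this, mul_inv_rev]
          calc g * g ^ t * (y : G) * ((g ^ t)⁻¹ * g⁻¹)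
              = g * (g ^ t * (y : G) * (g ^ t)⁻¹) * g⁻¹ := by group
            _ = g * ((y : G) ^ (k ^ t)) * g⁻¹ := by rw [ih]
            _ = (g * (y : G) * g⁻¹) ^ (k ^ t) := by rw [conj_pow]
            _ = ((y : G) ^ k) ^ (k ^ t) := by rw [hconj]
            _ = (y : G) ^ (k ^ (t + 1)) := by
                rw [← pow_mul, pow_succ, mul_comm (k ^ t) k]
    -- conclude
      have hye : (y : G) ^ (k ^ 2 ^ (max m 3 - 2)) = (y : G) ^ 1 := by
        rw [pow_eq_pow_iff_modEq, hyord]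
        exact aux_odd_pow' m hkodd
      have hfix : g ^ 2 ^ (max m 3 - 2) * (y : G) * (g ^ 2 ^ (max m 3 - 2))⁻¹ = (y : G) := by
        rw [hiter, hye, pow_one]
      have hcommy : Commute (g ^ 2 ^ (max m 3 - 2)) (y : G) := by
        show g ^ 2 ^ (max m 3 - 2) * (y : G) = (y : G) * g ^ 2 ^ (max m 3 - 2)
        conv_rhs => rw [← hfix]
        group
      rw [hAdef, Subgroup.mem_centralizer_iff]
      intro hG' hh
      obtain ⟨i, hi⟩ := (mem_powers_iff_mem_zpowers).2 (hy ⟨hG', hh⟩)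
      have hh' : hG' = (y : G) ^ i := by
        have := congrArg (Subtype.val : ↥N → G) hi
        simpa using this.symm
      rw [hh']
      exact (hcommy.pow_right i).symm
  -- q divides 2^(max m 3 - 2)
  obtain ⟨σ, hσ⟩ := hQcyc.exists_generator
  have hσord : orderOf σ = q := orderOf_eq_card_of_forall_mem_zpowers hσ
  have hqdvd : q ∣ 2 ^ (max m 3 - 2) := by
    rw [← hσord]
    obtain ⟨g₀', hg₀'⟩ := QuotientGroup.mk_surjective σ
    refine orderOf_dvd_of_pow_eq_one ?_
    rw [← hg₀', ← QuotientGroup.mk_pow]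
    rw [QuotientGroup.eq_one_iff]
    exact Hg g₀'
  -- 4q ≤ a and 16 ≤ a
  have hNle : (2 : ℕ) ^ m ≤ a := by
    rw [hadef, ← hm]
    exact Subgroup.card_le_of_le hNA
  have hn6 : 64 ≤ Nat.card G := by
    have h32 : (2 : ℕ) ^ 5 < 2 ^ n := by rw [← hn]; exact hcard
    have hn' : 5 < n := by
      exact (Nat.pow_lt_pow_iff_right (by norm_num)).1 h32
    calc (64 : ℕ) = 2 ^ 6 := by norm_num
    _ ≤ 2 ^ n := Nat.pow_le_pow_right (by norm_num) (by omega)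
    _ = Nat.card G := hn.symm
  have hqa4 : 4 * q ≤ a := by
    by_cases hm3 : 3 ≤ m
    · have hmax : max m 3 = m := by omega
      rw [hmax] at hqdvd
      have hqle : q ≤ 2 ^ (m - 2) := Nat.le_of_dvd (by positivity) hqdvd
      have h4 : 4 * 2 ^ (m - 2) = 2 ^ m := by
        have e : m - 2 + 2 = m := by omega
        calc 4 * 2 ^ (m - 2) = 2 ^ (m - 2) * 2 ^ 2 := by ring
        _ = 2 ^ (m - 2 + 2) := (pow_add 2 (m - 2) 2).symm
        _ = 2 ^ m := by rw [e]
      calc 4 * q ≤ 4 * 2 ^ (m - 2) := by omega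
      _ = 2 ^ m := h4
      _ ≤ a := hNle
    · have hmax : max m 3 = 3 := by omega
      rw [hmax] at hqdvd
      have hq2 : q ≤ 2 := Nat.le_of_dvd (by norm_num) (by simpa using hqdvd)
      have : 64 ≤ q * a := by rw [← hGa]; exact hn6
      interval_cases q <;> omega
  have ha16 : 16 ≤ a := by
    have h1 : 64 ≤ q * a := by rw [← hGa]; exact hn6
    have h2 : q * a ≤ a * a / 4 := by
      have : 4 * (q * a) ≤ a * a := by
        calc 4 * (q * a) = (4 * q) * a := by ring
        _ ≤ a * a := Nat.mul_le_mul_right a hqa4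
      omega
    nlinarith
  -- mStar G ≥ a^2
  have hAcomm : A ≤ Subgroup.centralizer (A : Set G) := by
    intro x hx
    rw [Subgroup.mem_centralizer_iff]
    intro hG' hh
    exact habA _ _ hh hx
  have hstar : a * a ≤ mStar G := by
    have h1 : a * a ≤ mCD A := by
      have : a ≤ Nat.card (Subgroup.centralizer (A : Set G)) := by
        rw [hadef]
        exact Subgroup.card_le_of_le hAcomm
      exact Nat.mul_le_mul_left a this
    refine le_trans h1 ?_
    refine le_csSup ?_ ⟨A, rfl⟩
    exact (Set.finite_range _).bddAbove
  -- lift the generator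
  obtain ⟨g₀, hg₀⟩ := QuotientGroup.mk_surjective σ
  -- key centrality lemma
  have Lcent : ∀ b : G, b ∈ A → ∀ w : G, w ∈ A → Commute w (g₀ * b) →
      w ∈ Subgroup.center G := by
    intro b hb w hw hcomm
    rw [Subgroup.mem_center_iff]
    intro u
    obtain ⟨i, hi⟩ := hσ ((u : G ⧸ A))
    have hmkx : ((g₀ * b : G) : G ⧸ A) = σ := by
      rw [QuotientGroup.mk_mul, hg₀]
      have : ((b : G) : G ⧸ A) = 1 := (QuotientGroup.eq_one_iff b).2 hb
      rw [this, mul_one]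
    have hv : u * ((g₀ * b) ^ i)⁻¹ ∈ A := by
      rw [← QuotientGroup.eq_one_iff]
      rw [QuotientGroup.mk_mul, QuotientGroup.mk_inv, QuotientGroup.mk_zpow, hmkx]
      rw [show σ ^ i = ((u : G) : G ⧸ A) from hi]
      simp
    have h1 : Commute w (u * ((g₀ * b) ^ i)⁻¹) := habA w _ hw hv
    have h2 : Commute w ((g₀ * b) ^ i) := hcomm.zpow_right i
    have h3 : Commute w u := by
      have := h1.mul_right h2
      rwa [inv_mul_cancel_right] at this
    exact h3.symm
  -- each subgroup ⟨g₀ b⟩ is not in CD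
  have hnotCD : ∀ b : ↥A, Subgroup.zpowers (g₀ * (b : G)) ∉ CD G := by
    intro b
    set x : G := g₀ * (b : G) with hxdef
    have hxq : x ^ q ∈ A := by
      rw [← QuotientGroup.eq_one_iff, QuotientGroup.mk_pow]
      have hmkx : ((x : G) : G ⧸ A) = σ := by
        rw [hxdef, QuotientGroup.mk_mul, hg₀]
        have : ((b : G) : G ⧸ A) = 1 := (QuotientGroup.eq_one_iff _).2 b.2
        rw [this, mul_one]
      rw [hmkx, hqdef]
      exact pow_card_eq_one'
    have hxqc : x ^ q ∈ Subgroup.center G := by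
      refine Lcent (b : G) b.2 _ hxq ?_
      exact ((Commute.refl x).pow_left q)
    have hx2q : x ^ (q * 2) = 1 := by
      have hz : (⟨x ^ q, hxqc⟩ : ↥(Subgroup.center G)) ^ 2 = 1 := by
        rw [← hZ]
        exact pow_card_eq_one'
      have := congrArg (Subtype.val : ↥(Subgroup.center G) → G) hz
      simp only [SubmonoidClass.coe_pow, OneMemClass.coe_one] at this
      rw [pow_mul]
      exact this
    have hordx : Nat.card (Subgroup.zpowers x) ≤ 2 * q := by
      rw [Nat.card_zpowers]
      have := orderOf_dvd_of_pow_eq_one hx2q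
      have hle := Nat.le_of_dvd (by omega) this
      omega
    -- centralizer bound
    set C : Subgroup G := Subgroup.centralizer ((Subgroup.zpowers x : Subgroup G) : Set G)
      with hCdef
    have hCcard : Nat.card ↥C ≤ 2 * q := by
      set φ : ↥C →* G ⧸ A := (QuotientGroup.mk' A).comp C.subtype with hφdef
      have hsplit : Nat.card ↥C = Nat.card (↥C ⧸ φ.ker) * Nat.card φ.ker :=
        Subgroup.card_eq_card_quotient_mul_card_subgroup φ.ker
      have hrange : Nat.card (↥C ⧸ φ.ker) = Nat.card φ.range :=
        Nat.card_congr (QuotientGroup.quotientKerEquivRange φ).toEquiv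
      have hrange_le : Nat.card φ.range ≤ q := by
        rw [hqdef]
        exact Nat.card_le_card_of_injective _ Subtype.coe_injective
      have hker_le : Nat.card φ.ker ≤ 2 := by
        rw [← hZ]
        refine Nat.card_le_card_of_injective
          (fun w => (⟨((w : ↥C) : G), ?_⟩ : ↥(Subgroup.center G))) ?_
        · have hwA : ((w : ↥C) : G) ∈ A := by
            have hwk : φ (w : ↥C) = 1 := w.2
            exact (QuotientGroup.eq_one_iff _).1 hwk
          have hwx : Commute ((w : ↥C) : G) x := by
            have hmem : ((w : ↥C) : G) ∈ Subgroup.centralizer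
                ((Subgroup.zpowers x : Subgroup G) : Set G) := (w : ↥C).2
            rw [Subgroup.mem_centralizer_iff] at hmem
            exact (hmem x (Subgroup.mem_zpowers x)).symm
          exact Lcent (b : G) b.2 _ hwA hwx
        · intro w₁ w₂ hw
          have h' := congrArg (fun z : ↥(Subgroup.center G) => (z : G)) hw
          simp only at h'
          exact Subtype.ext (Subtype.ext h')
      calc Nat.card ↥C = Nat.card (↥C ⧸ φ.ker) * Nat.card φ.ker := hsplit
      _ = Nat.card φ.range * Nat.card φ.ker := by rw [hrange]
      _ ≤ q * 2 := Nat.mul_le_mul hrange_le hker_le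
      _ = 2 * q := by ring
    -- measure strictly below mStar
    have hlt : mCD (Subgroup.zpowers x) < mStar G := by
      have h1 : mCD (Subgroup.zpowers x) ≤ (2 * q) * (2 * q) := by
        have hdef : mCD (Subgroup.zpowers x) = Nat.card (Subgroup.zpowers x) *
            Nat.card (Subgroup.centralizer ((Subgroup.zpowers x : Subgroup G) : Set G)) := rfl
        rw [hdef]
        exact Nat.mul_le_mul hordx hCcard
      have h2 : (2 * q) * (2 * q) < a * a := by nlinarith
      omega
    intro hmem
    rw [CD, Set.mem_setOf_eq] at hmem
    omega
  -- counting
  haveI : Fintype G := Fintype.ofFinite G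
  haveI : Fintype ↥A := Fintype.ofFinite ↥A
  haveI : Fintype ↥(Subgroup.center G) := Fintype.ofFinite _
  haveI : Fintype {H : Subgroup G // H ∉ CD G} := Fintype.ofFinite _
  set F : ↥A → Subgroup G := fun b => Subgroup.zpowers (g₀ * (b : G)) with hFdef
  have hfib : ∀ Hs ∈ Finset.univ.image F,
      (Finset.univ.filter (fun b : ↥A => F b = Hs)).card ≤ 2 := by
    intro Hs hHs
    set s := Finset.univ.filter (fun b : ↥A => F b = Hs) with hsdef
    rcases Finset.eq_empty_or_nonempty s with he | ⟨b₀, hb₀⟩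
    · rw [he]; simp
    · have hb₀' : F b₀ = Hs := by
        rw [hsdef] at hb₀
        exact (Finset.mem_filter.1 hb₀).2
      have hkey : ∀ b ∈ s, ((b₀ : G))⁻¹ * (b : G) ∈ Subgroup.center G := by
        intro b hb
        have hb' : F b = Hs := (Finset.mem_filter.1 hb).2
        have heq : Subgroup.zpowers (g₀ * (b : G)) = Subgroup.zpowers (g₀ * (b₀ : G)) := by
          have h1 : Subgroup.zpowers (g₀ * (b : G)) = Hs := hb'
          have h2 : Subgroup.zpowers (g₀ * (b₀ : G)) = Hs := hb₀'
          rw [h1, h2]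
        have hmemz : g₀ * (b : G) ∈ Subgroup.zpowers (g₀ * (b₀ : G)) := by
          rw [← heq]
          exact Subgroup.mem_zpowers _
        have hc : (g₀ * (b₀ : G))⁻¹ * (g₀ * (b : G)) ∈ Subgroup.zpowers (g₀ * (b₀ : G)) :=
          Subgroup.mul_mem _ (Subgroup.inv_mem _ (Subgroup.mem_zpowers _)) hmemz
        have hcc : (g₀ * (b₀ : G))⁻¹ * (g₀ * (b : G)) = ((b₀ : G))⁻¹ * (b : G) := by
          group
        have hcomm : Commute (((b₀ : G))⁻¹ * (b : G)) (g₀ * (b₀ : G)) := by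
          rw [← hcc]
          obtain ⟨i, hi⟩ := hc
          rw [← hi]
          exact ((Commute.refl _).zpow_left i)
        have hcA : ((b₀ : G))⁻¹ * (b : G) ∈ A :=
          A.mul_mem (A.inv_mem b₀.2) b.2
        exact Lcent (b₀ : G) b₀.2 _ hcA hcomm
      have hcnt : s.card ≤ (Finset.univ : Finset ↥(Subgroup.center G)).card := by
        refine Finset.card_le_card_of_injOn
          (fun b => if hmem : ((b₀ : G))⁻¹ * (b : G) ∈ Subgroup.center G
            then (⟨_, hmem⟩ : ↥(Subgroup.center G)) else 1) (fun b hb => Finset.mem_univ _) ?_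
        intro b₁ hb₁ b₂ hb₂ heq
        have h₁ := hkey b₁ hb₁
        have h₂ := hkey b₂ hb₂
        simp only at heq
        rw [dif_pos h₁, dif_pos h₂] at heq
        have := congrArg (Subtype.val : ↥(Subgroup.center G) → G) heq
        simp only at this
        have : (b₁ : G) = (b₂ : G) := by
          exact mul_left_cancel this
        exact Subtype.ext this
      have hc2 : (Finset.univ : Finset ↥(Subgroup.center G)).card = 2 := by
        rw [Finset.card_univ, ← Nat.card_eq_fintype_card]
        exact hZ
      omega
  have hcount := Finset.card_le_mul_card_image (f := F) Finset.univ 2 hfib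
  have hAcard : (Finset.univ : Finset ↥A).card = a := by
    rw [Finset.card_univ, ← Nat.card_eq_fintype_card]
  have himg : (Finset.univ.image F).card ≤ 6 := by
    have hle : (Finset.univ.image F).card ≤ Fintype.card {H : Subgroup G // H ∉ CD G} := by
      rw [← Fintype.card_coe (Finset.univ.image F)]
      refine Fintype.card_le_of_injective
        (fun s => (⟨(s : Subgroup G), ?_⟩ : {H : Subgroup G // H ∉ CD G})) ?_
      · have hs2 := s.2
        rw [Finset.mem_image] at hs2
        obtain ⟨b, _, hb⟩ := hs2
        have hb' : Subgroup.zpowers (g₀ * (b : G)) = (s : Subgroup G) := hb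
        exact hb' ▸ hnotCD b
      · intro s₁ s₂ hs
        have h' := congrArg (fun z : {H : Subgroup G // H ∉ CD G} => (z : Subgroup G)) hs
        simp only at h'
        exact Subtype.ext h'
    have : Fintype.card {H : Subgroup G // H ∉ CD G} ≤ 6 := by
      rw [← Nat.card_eq_fintype_card]
      exact h
    omega
  rw [hAcard] at hcount
  omega
end

section
/- For the quaternion group Q₈, the only subgroup not in CD(Q₈) is the trivial subgroup; i.e., δ_CD(Q₈) = 1. -/
open QuaternionGroup Subgroup

local notation "Q" => QuaternionGroup 2

lemma q_card : Nat.card Q = 8 := by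
  rw [Nat.card_eq_fintype_card, QuaternionGroup.card]

lemma card_filter_of_iff (H : Subgroup Q) (p : Q → Prop) [DecidablePred p]
    (h : ∀ g, g ∈ H ↔ p g) :
    Nat.card H = (Finset.univ.filter p).card := by
  rw [Nat.card_congr (Equiv.subtypeEquivRight h), Nat.card_eq_fintype_card,
    Fintype.card_subtype]

lemma sq_one_central : ∀ x : Q, x ^ 2 = 1 → ∀ g : Q, x * g = g * x := by decide

lemma sq_one_card : Fintype.card {g : Q // g ^ 2 = 1} = 2 := by decide

lemma pow_four_eq_one : ∀ g : Q, g ^ 4 = 1 := by decide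

lemma comm_filter_card : ∀ x : Q, x ^ 2 ≠ 1 →
    (Finset.univ.filter fun g : Q => x * g = g * x).card = 4 := by decide

lemma key (H : Subgroup Q) (hH : H ≠ ⊥) : mCD H = 16 := by
  have hdvd : Nat.card H ∣ 8 := q_card ▸ Subgroup.card_subgroup_dvd_card H
  have h8 : ∀ m : ℕ, m ∣ 8 → m = 1 ∨ m = 2 ∨ m = 4 ∨ m = 8 := by
    intro m hm
    have h := Nat.le_of_dvd (by norm_num) hm
    interval_cases m <;> revert hm <;> decide
  have hne : Nat.card H ≠ 1 := fun h1 => hH (Subgroup.card_eq_one.mp h1)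
  rcases h8 _ hdvd with h | h | h | h
  · exact absurd h hne
  · -- card 2 : H ≤ center
    have hsq : ∀ x ∈ H, x ^ 2 = 1 := by
      intro x hx
      have h1 : (⟨x, hx⟩ : H) ^ Nat.card H = 1 := pow_card_eq_one'
      rw [h] at h1
      simpa using congrArg Subtype.val h1
    have hcen : Subgroup.centralizer (H : Set Q) = ⊤ := by
      rw [eq_top_iff']
      intro g
      rw [Subgroup.mem_centralizer_iff]
      intro m hm
      exact sq_one_central m (hsq m hm) g
    rw [mCD, h, hcen, Subgroup.card_top, q_card]
  · -- card 4 : H = zpowers x for some x with x^2 ≠ 1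
    obtain ⟨x, hx, hx2⟩ : ∃ x ∈ H, x ^ 2 ≠ 1 := by
      by_contra hc
      push_neg at hc
      have hinj : Function.Injective
          (fun y : H => (⟨y.1, hc y.1 y.2⟩ : {g : Q // g ^ 2 = 1})) := by
        intro y z hyz
        exact Subtype.ext (congrArg (Subtype.val (p := fun g : Q => g ^ 2 = 1)) hyz)
      have := Nat.card_le_card_of_injective _ hinj
      rw [h, Nat.card_eq_fintype_card, sq_one_card] at this
      omega
    have hord : orderOf x = 4 := by
      have := orderOf_eq_prime_pow (p := 2) (n := 1) (by simpa using hx2)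
        (by simpa using pow_four_eq_one x)
      simpa using this
    have hzp : Subgroup.zpowers x = H := by
      apply Subgroup.eq_of_le_of_card_ge (Subgroup.zpowers_le.mpr hx)
      rw [h, Nat.card_zpowers, hord]
    have hcen : Nat.card (Subgroup.centralizer (H : Set Q)) = 4 := by
      rw [card_filter_of_iff _ (fun g => x * g = g * x)]
      · exact comm_filter_card x hx2
      · intro g
        rw [Subgroup.mem_centralizer_iff]
        constructor
        · intro hg; exact hg x (by rw [← hzp]; exact Subgroup.mem_zpowers x)
        · intro hg m hm
          rw [← hzp] at hm
          obtain ⟨k, rfl⟩ := Subgroup.mem_zpowers_iff.mp hm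
          exact Commute.zpow_left hg k
    rw [mCD, h, hcen]
  · -- card 8 : H = ⊤
    have htop : H = ⊤ := Subgroup.eq_top_of_card_eq H (h.trans q_card.symm)
    have hcen : Subgroup.centralizer ((⊤ : Subgroup Q) : Set Q)
        = Subgroup.center Q := by
      rw [Subgroup.coe_top, Subgroup.centralizer_univ]
    have hc2 : Nat.card (Subgroup.center Q) = 2 := by
      rw [card_filter_of_iff _ (fun z => ∀ g : Q, g * z = z * g)
        (fun z => Subgroup.mem_center_iff)]
      decide
    rw [mCD, htop, Subgroup.card_top, q_card, hcen, hc2]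

lemma mCD_bot : mCD (⊥ : Subgroup Q) = 8 := by
  have hcen : Subgroup.centralizer (((⊥ : Subgroup Q)) : Set Q) = ⊤ := by
    rw [eq_top_iff']
    intro g
    rw [Subgroup.mem_centralizer_iff]
    intro m hm
    simp only [Subgroup.coe_bot, Set.mem_singleton_iff] at hm
    subst hm; simp
  rw [mCD, Subgroup.card_bot, hcen, Subgroup.card_top, q_card]

lemma mStar_Q : mStar Q = 16 := by
  apply le_antisymm
  · refine csSup_le ⟨mCD ⊥, ⟨⊥, rfl⟩⟩ ?_
    rintro m ⟨H, rfl⟩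
    show mCD H ≤ 16
    by_cases h : H = ⊥
    · rw [h, mCD_bot]; omega
    · rw [key H h]
  · apply le_csSup (Set.Finite.bddAbove (Set.finite_range _))
    exact ⟨⊤, key ⊤ (by simp [eq_comm, bot_ne_top])⟩

theorem stmt17 :
    deltaCD (QuaternionGroup 2) = 1 ∧
      {H : Subgroup (QuaternionGroup 2) | H ∉ CD (QuaternionGroup 2)} = {⊥} := by
  have h2 : {H : Subgroup Q | H ∉ CD Q} = {⊥} := by
    ext H
    simp only [Set.mem_setOf_eq, CD, mStar_Q, Set.mem_singleton_iff]
    constructor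
    · intro hne
      by_contra hb
      exact hne (key H hb)
    · intro hb
      rw [hb, mCD_bot]
      omega
  refine ⟨?_, h2⟩
  have e : {H : Subgroup Q // H ∉ CD Q} ≃ ({⊥} : Set (Subgroup Q)) :=
    Equiv.subtypeEquivRight (fun H => by rw [← h2]; rfl)
  rw [deltaCD, Nat.card_congr e, Nat.card_unique]
end
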